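/- arXiv:quant-ph/0309186 — 3 statements merged into one kernel-verified Lean document; each statement's English description precedes it below -/
import Mathlib

section
/- For any pure three-qutrit state, with λ_1^{(a)} ≤ λ_2^{(a)} ≤ λ_3^{(a)} the increasingly ordered eigenvalues of the a-th one-particle reduced density matrix, the inequality λ_2^{(a)} + λ_1^{(a)} ≤ λ_2^{(b)} + λ_1^{(b)} + λ_2^{(c)} + λ_1^{(c)} holds for every permutation (a,b,c) of (1,2,3). -/
open scoped BigOperators

/-- The one-particle reduced density matrix of the first qutrit. -/
noncomputable def rho1 (c : Fin 3 → Fin 3 → Fin 3 → ℂ) : Matrix (Fin 3) (Fin 3) ℂ :=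
  Matrix.of fun i i' => ∑ j : Fin 3, ∑ k : Fin 3, c i j k * (starRingEnd ℂ) (c i' j k)

/-- The one-particle reduced density matrix of the second qutrit. -/
noncomputable def rho2 (c : Fin 3 → Fin 3 → Fin 3 → ℂ) : Matrix (Fin 3) (Fin 3) ℂ :=
  Matrix.of fun j j' => ∑ i : Fin 3, ∑ k : Fin 3, c i j k * (starRingEnd ℂ) (c i j' k)

/-- The one-particle reduced density matrix of the third qutrit. -/
noncomputable def rho3 (c : Fin 3 → Fin 3 → Fin 3 → ℂ) : Matrix (Fin 3) (Fin 3) ℂ :=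
  Matrix.of fun k k' => ∑ i : Fin 3, ∑ j : Fin 3, c i j k * (starRingEnd ℂ) (c i j k')

/-- `l` lists the eigenvalues of the Hermitian matrix `M` in increasing order. -/
def IsOrderedSpectrum (M : Matrix (Fin 3) (Fin 3) ℂ) (l : Fin 3 → ℝ) : Prop :=
  Monotone l ∧ ∃ hM : M.IsHermitian, ∃ σ : Equiv.Perm (Fin 3),
    ∀ i, l i = hM.eigenvalues (σ i)

/-!
Since each reduced density matrix has trace one, the inequality for `(a, b, c)` is equivalent to
`λ₃⁽ᵇ⁾ + λ₃⁽ᶜ⁾ ≤ 1 + λ₃⁽ᵃ⁾`. Let `y`, `z` be unit top eigenvectors of `ρ⁽ᵇ⁾`, `ρ⁽ᶜ⁾`, so that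
`λ₃⁽ᵇ⁾ + λ₃⁽ᶜ⁾ = ⟨ψ, (P_y ⊗ 1) ψ⟩ + ⟨ψ, (1 ⊗ P_z) ψ⟩`. For each fixed value of the `a`-index, two
Pythagoras identities for the projection onto `z` and a Cauchy–Schwarz step for `y` bound this by
`1 + ⟨ψ, (P_y ⊗ P_z) ψ⟩`. Finally `⟨ψ, (P_y ⊗ P_z) ψ⟩ = ‖g‖²` with `g = (y ⊗ z)† ψ`, and
Cauchy–Schwarz against `y ⊗ z` together with the Rayleigh bound for `ρ⁽ᵃ⁾` gives
`‖g‖⁴ ≤ ⟨g, ρ⁽ᵃ⁾ g⟩ ≤ λ₃⁽ᵃ⁾ ‖g‖²`.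
-/

open Matrix
open scoped ComplexConjugate InnerProductSpace

theorem Complex.sq_norm_sum_conj_mul_le {ι : Type*} (s : Finset ι) (a b : ι → ℂ) :
    ‖∑ i ∈ s, conj (a i) * b i‖ ^ 2 ≤ (∑ i ∈ s, ‖a i‖ ^ 2) * ∑ i ∈ s, ‖b i‖ ^ 2 := by
  calc ‖∑ i ∈ s, conj (a i) * b i‖ ^ 2 ≤ (∑ i ∈ s, ‖a i‖ * ‖b i‖) ^ 2 := by
        gcongr
        simpa using norm_sum_le s (fun i => conj (a i) * b i)
    _ ≤ _ := Finset.sum_mul_sq_le_sq_mul_sq s _ _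

theorem Complex.sum_sq_norm_sub_mul_eq {μ : Type*} [Fintype μ] {z : μ → ℂ}
    (hz : ∑ k, ‖z k‖ ^ 2 = 1) (u : μ → ℂ) :
    ∑ k, ‖u k - (∑ k', conj (z k') * u k') * z k‖ ^ 2 =
      ∑ k, ‖u k‖ ^ 2 - ‖∑ k, conj (z k) * u k‖ ^ 2 := by
  set w := ∑ k, conj (z k) * u k with hw
  have hw₁ : ∑ k, u k * conj (z k) = w := by simp [hw, mul_comm]
  have hw₂ : ∑ k, z k * conj (u k) = conj w := by simp [hw, map_sum, mul_comm]
  have hz' : ∑ k, (‖z k‖ ^ 2 : ℂ) = 1 := by exact_mod_cast hz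
  have expand (k : μ) : (‖u k - w * z k‖ ^ 2 : ℂ) = ‖u k‖ ^ 2 - conj w * (u k * conj (z k))
      - w * (z k * conj (u k)) + w * conj w * (z k * conj (z k)) := by
    simp only [← Complex.mul_conj', map_sub, map_mul]; ring
  apply Complex.ofReal_injective
  push_cast
  simp only [expand, Finset.sum_add_distrib, Finset.sum_sub_distrib, ← Finset.mul_sum, hw₁, hw₂,
    Complex.mul_conj', Complex.conj_mul', hz']
  ring

theorem Matrix.IsHermitian.re_star_dotProduct_mulVec_le {𝕜 n : Type*} [RCLike 𝕜] [Fintype n]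
    [DecidableEq n] {M : Matrix n n 𝕜} (hM : M.IsHermitian) {r : ℝ}
    (hr : ∀ i, hM.eigenvalues i ≤ r) (v : n → 𝕜) :
    RCLike.re (star v ⬝ᵥ M *ᵥ v) ≤ r * ∑ i, ‖v i‖ ^ 2 := by
  set x : EuclideanSpace 𝕜 n := WithLp.toLp 2 v
  set b := hM.eigenvectorBasis
  have hb (i : n) : ⟪b i, toEuclideanLin M x⟫_𝕜 = hM.eigenvalues i * ⟪b i, x⟫_𝕜 := by
    rw [← isSymmetric_toEuclideanLin_iff.mpr hM, toLpLin_apply, hM.mulVec_eigenvectorBasis,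
      WithLp.toLp_smul, WithLp.toLp_ofLp, RCLike.real_smul_eq_coe_smul (K := 𝕜), inner_smul_left,
      RCLike.conj_ofReal]
  have hform : star v ⬝ᵥ M *ᵥ v = ∑ i, (hM.eigenvalues i : 𝕜) * (‖⟪b i, x⟫_𝕜‖ ^ 2 : ℝ) := by
    rw [dotProduct_comm, ← EuclideanSpace.inner_toLp_toLp]
    change ⟪x, toEuclideanLin M x⟫_𝕜 = _
    rw [← b.sum_inner_mul_inner]
    refine Finset.sum_congr rfl fun i _ => ?_
    rw [hb, ← inner_conj_symm x (b i)]
    push_cast [← RCLike.mul_conj]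
    ring
  calc RCLike.re (star v ⬝ᵥ M *ᵥ v) = ∑ i, hM.eigenvalues i * ‖⟪b i, x⟫_𝕜‖ ^ 2 := by
        rw [hform, map_sum]; simp_rw [← RCLike.ofReal_mul, RCLike.ofReal_re]
    _ ≤ ∑ i, r * ‖⟪b i, x⟫_𝕜‖ ^ 2 := by gcongr with i; exact hr i
    _ = r * ∑ i, ‖v i‖ ^ 2 := by
        rw [← Finset.mul_sum, b.sum_sq_norm_inner_right, EuclideanSpace.norm_sq_eq]

/-- `rho1 c`, `rho2 c` and `rho3 c` are, definitionally, this matrix for `c` with its slots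
permuted. -/
noncomputable def reducedDensityMatrix {ι κ μ : Type*} [Fintype κ] [Fintype μ]
    (c : ι → κ → μ → ℂ) : Matrix ι ι ℂ :=
  Matrix.of fun i i' => ∑ j, ∑ k, c i j k * conj (c i' j k)

theorem reducedDensityMatrix_swap {ι κ μ : Type*} [Fintype κ] [Fintype μ]
    (c : ι → κ → μ → ℂ) :
    reducedDensityMatrix (fun i k j => c i j k) = reducedDensityMatrix c := by
  ext i i'
  exact Finset.sum_comm

section ReducedDensityMatrix

variable {ι κ μ : Type*} [Fintype ι] [Fintype κ] [Fintype μ]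

theorem star_dotProduct_reducedDensityMatrix_mulVec (c : ι → κ → μ → ℂ) (v : ι → ℂ) :
    star v ⬝ᵥ reducedDensityMatrix c *ᵥ v = ↑(∑ j, ∑ k, ‖∑ i, conj (v i) * c i j k‖ ^ 2) := by
  simp only [dotProduct, mulVec, reducedDensityMatrix, of_apply, Pi.star_apply, RCLike.star_def,
    Finset.mul_sum, Finset.sum_mul]
  push_cast
  simp_rw [← Complex.mul_conj', map_sum, map_mul, Complex.conj_conj, Finset.sum_mul, Finset.mul_sum,
    Finset.sum_comm (s := (Finset.univ : Finset ι)) (t := (Finset.univ : Finset κ)),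
    Finset.sum_comm (s := (Finset.univ : Finset ι)) (t := (Finset.univ : Finset μ))]
  congr! 4 with j _ k _ i _ i' _
  ring

theorem trace_reducedDensityMatrix (c : ι → κ → μ → ℂ) :
    (reducedDensityMatrix c).trace = ↑(∑ i, ∑ j, ∑ k, ‖c i j k‖ ^ 2) := by
  simp [Matrix.trace, reducedDensityMatrix, Complex.mul_conj']

theorem sum_sq_norm_contract_add_le (M : κ → μ → ℂ) {y : κ → ℂ} {z : μ → ℂ}
    (hy : ∑ j, ‖y j‖ ^ 2 = 1) (hz : ∑ k, ‖z k‖ ^ 2 = 1) :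
    ∑ k, ‖∑ j, conj (y j) * M j k‖ ^ 2 + ∑ j, ‖∑ k, conj (z k) * M j k‖ ^ 2 ≤
      ∑ j, ∑ k, ‖M j k‖ ^ 2 + ‖∑ j, ∑ k, conj (y j * z k) * M j k‖ ^ 2 := by
  set a := fun k => ∑ j, conj (y j) * M j k
  set b := fun j => ∑ k, conj (z k) * M j k
  have hg : ∑ j, ∑ k, conj (y j * z k) * M j k = ∑ k, conj (z k) * a k := by
    simp only [a, map_mul, Finset.mul_sum]
    rw [Finset.sum_comm]
    congr! 2 with k _ j _
    ring
  have hcol (k : μ) : a k - (∑ k', conj (z k') * a k') * z k =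
      ∑ j, conj (y j) * (M j k - b j * z k) := by
    rw [← hg]
    simp only [a, b, mul_sub, Finset.sum_sub_distrib, Finset.sum_mul, Finset.mul_sum, map_mul]
    congr! 3 with j _ k' _
    ring
  have hcs : ∑ k, ‖a k - (∑ k', conj (z k') * a k') * z k‖ ^ 2 ≤
      ∑ j, ∑ k, ‖M j k - b j * z k‖ ^ 2 := by
    rw [Finset.sum_comm]
    gcongr with k
    rw [hcol]
    simpa [hy] using Complex.sq_norm_sum_conj_mul_le Finset.univ y fun j => M j k - b j * z k
  have hrow (j : κ) : ∑ k, ‖M j k - b j * z k‖ ^ 2 = ∑ k, ‖M j k‖ ^ 2 - ‖b j‖ ^ 2 :=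
    Complex.sum_sq_norm_sub_mul_eq hz (M j)
  rw [Complex.sum_sq_norm_sub_mul_eq hz, Finset.sum_congr rfl fun j _ => hrow j,
    Finset.sum_sub_distrib] at hcs
  change ∑ k, ‖a k‖ ^ 2 + ∑ j, ‖b j‖ ^ 2 ≤ _
  rw [hg]
  linarith

theorem sum_sq_norm_contract_le (c : ι → κ → μ → ℂ) {p : ℝ} (hp₀ : 0 ≤ p)
    (hp : ∀ v, RCLike.re (star v ⬝ᵥ reducedDensityMatrix c *ᵥ v) ≤ p * ∑ i, ‖v i‖ ^ 2)
    {u : κ → μ → ℂ} (hu : ∑ j, ∑ k, ‖u j k‖ ^ 2 = 1) :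
    ∑ i, ‖∑ j, ∑ k, conj (u j k) * c i j k‖ ^ 2 ≤ p := by
  set g := fun i => ∑ j, ∑ k, conj (u j k) * c i j k
  set G := ∑ i, ‖g i‖ ^ 2
  have hG : (G : ℂ) = ∑ jk ∈ Finset.univ ×ˢ Finset.univ,
      conj (u jk.1 jk.2) * ∑ i, conj (g i) * c i jk.1 jk.2 := by
    simp only [G, Finset.sum_product, Finset.mul_sum]
    push_cast
    simp_rw [← Complex.conj_mul', g, Finset.mul_sum]
    rw [Finset.sum_comm]
    simp_rw [Finset.sum_comm (s := (Finset.univ : Finset ι)) (t := (Finset.univ : Finset μ))]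
    congr! 3
    ring
  have hGR : G ^ 2 ≤ ∑ j, ∑ k, ‖∑ i, conj (g i) * c i j k‖ ^ 2 := by
    have := Complex.sq_norm_sum_conj_mul_le (Finset.univ ×ˢ Finset.univ) (fun jk => u jk.1 jk.2)
      fun jk => ∑ i, conj (g i) * c i jk.1 jk.2
    rwa [← hG, Complex.norm_real, Real.norm_of_nonneg (by positivity), Finset.sum_product,
      Finset.sum_product, hu, one_mul] at this
  have hRp : ∑ j, ∑ k, ‖∑ i, conj (g i) * c i j k‖ ^ 2 ≤ p * G := by
    have := hp g
    rwa [star_dotProduct_reducedDensityMatrix_mulVec, RCLike.re_to_complex,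
      Complex.ofReal_re] at this
  nlinarith [show 0 ≤ G by positivity]

theorem re_dotProduct_reducedDensityMatrix_add_le (c : ι → κ → μ → ℂ)
    (hc : ∑ i, ∑ j, ∑ k, ‖c i j k‖ ^ 2 = 1) {p : ℝ} (hp₀ : 0 ≤ p)
    (hp : ∀ v, RCLike.re (star v ⬝ᵥ reducedDensityMatrix c *ᵥ v) ≤ p * ∑ i, ‖v i‖ ^ 2)
    {y : κ → ℂ} {z : μ → ℂ} (hy : ∑ j, ‖y j‖ ^ 2 = 1) (hz : ∑ k, ‖z k‖ ^ 2 = 1) :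
    RCLike.re (star y ⬝ᵥ reducedDensityMatrix (fun j i k => c i j k) *ᵥ y) +
      RCLike.re (star z ⬝ᵥ reducedDensityMatrix (fun k i j => c i j k) *ᵥ z) ≤ 1 + p := by
  have hyz : ∑ j, ∑ k, ‖y j * z k‖ ^ 2 = 1 := by
    simp [mul_pow, ← Finset.mul_sum, hy, hz]
  simp only [star_dotProduct_reducedDensityMatrix_mulVec, RCLike.re_to_complex, Complex.ofReal_re]
  calc _ = ∑ i, (∑ k, ‖∑ j, conj (y j) * c i j k‖ ^ 2 + ∑ j, ‖∑ k, conj (z k) * c i j k‖ ^ 2) :=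
        Finset.sum_add_distrib.symm
    _ ≤ ∑ i, (∑ j, ∑ k, ‖c i j k‖ ^ 2 + ‖∑ j, ∑ k, conj (y j * z k) * c i j k‖ ^ 2) :=
        Finset.sum_le_sum fun i _ => sum_sq_norm_contract_add_le (c i) hy hz
    _ ≤ 1 + p := by
        rw [Finset.sum_add_distrib, hc]
        gcongr
        exact sum_sq_norm_contract_le c hp₀ hp hyz

end ReducedDensityMatrix

namespace IsOrderedSpectrum

variable {M : Matrix (Fin 3) (Fin 3) ℂ} {l : Fin 3 → ℝ}

theorem re_star_dotProduct_mulVec_le (h : IsOrderedSpectrum M l) (v : Fin 3 → ℂ) :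
    RCLike.re (star v ⬝ᵥ M *ᵥ v) ≤ l 2 * ∑ i, ‖v i‖ ^ 2 := by
  obtain ⟨hmono, hM, σ, hl⟩ := h
  refine hM.re_star_dotProduct_mulVec_le (fun i => ?_) v
  rw [← σ.apply_symm_apply i, ← hl]
  exact hmono (Fin.le_last _)

theorem exists_re_star_dotProduct_mulVec_eq (h : IsOrderedSpectrum M l) :
    ∃ y : Fin 3 → ℂ, ∑ i, ‖y i‖ ^ 2 = 1 ∧ RCLike.re (star y ⬝ᵥ M *ᵥ y) = l 2 := by
  obtain ⟨-, hM, σ, hl⟩ := h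
  refine ⟨hM.eigenvectorBasis (σ 2), ?_, by rw [hl, hM.eigenvalues_eq]⟩
  rw [← EuclideanSpace.norm_sq_eq, hM.eigenvectorBasis.orthonormal.1, one_pow]

theorem sum_eq_re_trace (h : IsOrderedSpectrum M l) : l 0 + l 1 + l 2 = RCLike.re M.trace := by
  obtain ⟨-, hM, σ, hl⟩ := h
  rw [hM.trace_eq_sum_eigenvalues, ← Equiv.sum_comp σ, Fin.sum_univ_three]
  simp [hl]

end IsOrderedSpectrum

theorem sum_eq_one_of_isOrderedSpectrum (c : Fin 3 → Fin 3 → Fin 3 → ℂ)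
    (hc : ∑ i, ∑ j, ∑ k, ‖c i j k‖ ^ 2 = 1) {l : Fin 3 → ℝ}
    (h : IsOrderedSpectrum (reducedDensityMatrix c) l) : l 0 + l 1 + l 2 = 1 := by
  rw [h.sum_eq_re_trace, trace_reducedDensityMatrix, hc]
  simp

theorem largest_add_largest_le_one_add_largest (c : Fin 3 → Fin 3 → Fin 3 → ℂ)
    (hc : ∑ i, ∑ j, ∑ k, ‖c i j k‖ ^ 2 = 1) {p q r : Fin 3 → ℝ}
    (hA : IsOrderedSpectrum (reducedDensityMatrix c) p)
    (hB : IsOrderedSpectrum (reducedDensityMatrix fun j i k => c i j k) q)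
    (hC : IsOrderedSpectrum (reducedDensityMatrix fun k i j => c i j k) r) :
    q 2 + r 2 ≤ 1 + p 2 := by
  obtain ⟨y, hy, hyq⟩ := hB.exists_re_star_dotProduct_mulVec_eq
  obtain ⟨z, hz, hzr⟩ := hC.exists_re_star_dotProduct_mulVec_eq
  have hp₀ : 0 ≤ p 2 := by
    have := sum_eq_one_of_isOrderedSpectrum c hc hA
    linarith [hA.1 (Fin.zero_le 2), hA.1 (show (1 : Fin 3) ≤ 2 by decide)]
  rw [← hyq, ← hzr]
  exact re_dotProduct_reducedDensityMatrix_add_le c hc hp₀ hA.re_star_dotProduct_mulVec_le hy hz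

theorem three_qutrit_ineq1 (c : Fin 3 → Fin 3 → Fin 3 → ℂ)
    (hnorm : ∑ i : Fin 3, ∑ j : Fin 3, ∑ k : Fin 3, ‖c i j k‖ ^ 2 = 1)
    (l : Fin 3 → Fin 3 → ℝ)
    (h1 : IsOrderedSpectrum (rho1 c) (l 0))
    (h2 : IsOrderedSpectrum (rho2 c) (l 1))
    (h3 : IsOrderedSpectrum (rho3 c) (l 2)) :
    ∀ a b c' : Fin 3, a ≠ b → a ≠ c' → b ≠ c' →
      l a 1 + l a 0 ≤ l b 1 + l b 0 + l c' 1 + l c' 0 := by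
  have hc₂ : ∑ j, ∑ i, ∑ k, ‖c i j k‖ ^ 2 = 1 := Finset.sum_comm.trans hnorm
  have hc₃ : ∑ k, ∑ i, ∑ j, ‖c i j k‖ ^ 2 = 1 :=
    Finset.sum_comm.trans ((Finset.sum_congr rfl fun _ _ => Finset.sum_comm).trans hnorm)
  have h1' : IsOrderedSpectrum (reducedDensityMatrix fun i k j => c i j k) (l 0) := by
    rwa [reducedDensityMatrix_swap]
  have h2' : IsOrderedSpectrum (reducedDensityMatrix fun j k i => c i j k) (l 1) := by
    rwa [reducedDensityMatrix_swap fun j i k => c i j k]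
  have h3' : IsOrderedSpectrum (reducedDensityMatrix fun k j i => c i j k) (l 2) := by
    rwa [reducedDensityMatrix_swap fun k i j => c i j k]
  have hsum₀ := sum_eq_one_of_isOrderedSpectrum c hnorm h1
  have hsum₁ := sum_eq_one_of_isOrderedSpectrum (fun j i k => c i j k) hc₂ h2
  have hsum₂ := sum_eq_one_of_isOrderedSpectrum (fun k i j => c i j k) hc₃ h3
  have hmax₀ := largest_add_largest_le_one_add_largest c hnorm h1 h2 h3
  have hmax₁ := largest_add_largest_le_one_add_largest (fun j i k => c i j k) hc₂ h2 h1 h3'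
  have hmax₂ := largest_add_largest_le_one_add_largest (fun k i j => c i j k) hc₃ h3 h1' h2'
  intro a b c' hab hac hbc
  fin_cases a <;> fin_cases b <;> fin_cases c' <;>
    simp only [Fin.zero_eta, Fin.mk_one, Fin.reduceFinMk, ne_eq, not_true_eq_false]
      at hab hac hbc ⊢ <;>
    linarith
end

section
/- For any pure three-qutrit state, with λ_1^{(a)} ≤ λ_2^{(a)} ≤ λ_3^{(a)} the increasingly ordered eigenvalues of the a-th one-particle reduced density matrix, the inequality λ_3^{(a)} + λ_1^{(a)} ≤ λ_2^{(b)} + λ_1^{(b)} + λ_3^{(c)} + λ_1^{(c)} holds for every permutation (a,b,c) of (1,2,3). -/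
/-!
Since every `ρ^(a)` has trace `N = ‖ψ‖²`, the inequality for `(a, b, c)` is equivalent to
`λ₃^(b) + λ₂^(c) ≤ N + λ₂^(a)`. Take a top eigenvector `v` of `ρ^(b)`, and a unit vector `w` in
the span of the two top eigenvectors of `ρ^(c)` such that the vector `x = ⟨v ⊗ w|ψ⟩` of qutrit
`a` is orthogonal to a top eigenvector of `ρ^(a)`; two linear conditions on `w ∈ ℂ³` can always
be met. Then `λ₃^(b) + λ₂^(c) ≤ ⟨v|ρ^(b)|v⟩ + ⟨w|ρ^(c)|w⟩ ≤ N + ‖x‖²`, because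
`‖Pψ‖² + ‖Qψ‖² ≤ ‖ψ‖² + ‖PQψ‖²` for the commuting projections `P`, `Q` onto `v` and `w`.
Finally `‖x‖⁴ = |⟨x ⊗ v ⊗ w|ψ⟩|² ≤ ⟨x|ρ^(a)|x⟩ ≤ λ₂^(a) ‖x‖²`, so `‖x‖² ≤ λ₂^(a)`.
-/

open scoped BigOperators

open Matrix
open scoped ComplexOrder

section Vectors

variable {n : Type*} [Fintype n]

lemma star_dotProduct_self_eq (x : n → ℂ) : star x ⬝ᵥ x = ((∑ i, ‖x i‖ ^ 2 : ℝ) : ℂ) := by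
  simp [dotProduct, Complex.conj_mul']

lemma norm_star_dotProduct_sq_le (x y : n → ℂ) :
    ‖star x ⬝ᵥ y‖ ^ 2 ≤ (∑ i, ‖x i‖ ^ 2) * ∑ i, ‖y i‖ ^ 2 := by
  have h := norm_inner_le_norm (𝕜 := ℂ) (WithLp.toLp 2 x) (WithLp.toLp 2 y)
  rw [EuclideanSpace.inner_toLp_toLp, dotProduct_comm] at h
  rw [← EuclideanSpace.norm_sq_eq (WithLp.toLp 2 x), ← EuclideanSpace.norm_sq_eq (WithLp.toLp 2 y),
    ← mul_pow]
  gcongr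

lemma sum_norm_sub_proj_sq {v : n → ℂ} (hv : ∑ i, ‖v i‖ ^ 2 = 1) (z : n → ℂ) :
    ∑ i, ‖z i - (star v ⬝ᵥ z) * v i‖ ^ 2 = ∑ i, ‖z i‖ ^ 2 - ‖star v ⬝ᵥ z‖ ^ 2 := by
  set t := star v ⬝ᵥ z
  have hr : (fun i => z i - t * v i) = z - t • v := rfl
  have hzv : star z ⬝ᵥ v = star t := by rw [star_dotProduct]
  have hvv : star v ⬝ᵥ v = 1 := by rw [star_dotProduct_self_eq, hv]; simp
  apply Complex.ofReal_injective
  rw [Complex.ofReal_sub, ← star_dotProduct_self_eq, ← star_dotProduct_self_eq, hr,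
    Complex.ofReal_pow, ← Complex.conj_mul']
  simp only [star_sub, star_smul, sub_dotProduct, dotProduct_sub, smul_dotProduct,
    dotProduct_smul, hzv, hvv, smul_eq_mul]
  simp [t]

lemma sum_norm_mulVec_sq_le {m : Type*} [Fintype m] (R : Matrix m n ℂ) (y : n → ℂ) :
    ∑ j, ‖(R *ᵥ y) j‖ ^ 2 ≤ (∑ j, ∑ k, ‖R j k‖ ^ 2) * ∑ k, ‖y k‖ ^ 2 := by
  rw [Finset.sum_mul]
  refine Finset.sum_le_sum fun j _ => ?_
  simpa [mulVec, dotProduct_comm] using norm_star_dotProduct_sq_le (star (R j)) y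

/-- The inequality `‖Pψ‖² + ‖Qψ‖² ≤ ‖ψ‖² + ‖PQψ‖²` for the projections `P`, `Q` onto `v`
and `w` acting on the two indices of `C`. -/
lemma sum_norm_vecMul_sq_add_sum_norm_mulVec_sq_le {κ μ : Type*} [Fintype κ] [Fintype μ]
    (C : Matrix κ μ ℂ) {v : κ → ℂ} {w : μ → ℂ}
    (hv : ∑ j, ‖v j‖ ^ 2 = 1) (hw : ∑ k, ‖w k‖ ^ 2 = 1) :
    ∑ k, ‖(star v ᵥ* C) k‖ ^ 2 + ∑ j, ‖(C *ᵥ star w) j‖ ^ 2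
      ≤ ∑ j, ∑ k, ‖C j k‖ ^ 2 + ‖star v ⬝ᵥ C *ᵥ star w‖ ^ 2 := by
  set d := star v ᵥ* C
  -- `R = (1 - P) C`
  set R := C - vecMulVec v d
  have hcol : ∀ k, ∑ j, ‖R j k‖ ^ 2 = ∑ j, ‖C j k‖ ^ 2 - ‖d k‖ ^ 2 := fun k => by
    simpa [R, d, vecMulVec_apply, vecMul, mul_comm] using sum_norm_sub_proj_sq hv (fun j => C j k)
  have hrow : R *ᵥ star w = fun j => (C *ᵥ star w) j - (star v ⬝ᵥ C *ᵥ star w) * v j := by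
    ext j
    simp [R, sub_mulVec, vecMulVec_mulVec, dotProduct_mulVec, d, mul_comm]
  have hR := sum_norm_mulVec_sq_le R (star w)
  rw [hrow, sum_norm_sub_proj_sq hv] at hR
  simp only [Pi.star_apply, norm_star, hw, mul_one] at hR
  rw [Finset.sum_comm, Finset.sum_congr rfl fun k _ => hcol k, Finset.sum_sub_distrib,
    Finset.sum_comm] at hR
  linarith

lemma re_star_dotProduct_mul_conjTranspose_mulVec {p : Type*} [Fintype p] (F : Matrix n p ℂ)
    (x : n → ℂ) : (star x ⬝ᵥ (F * Fᴴ) *ᵥ x).re = ∑ q, ‖(star x ᵥ* F) q‖ ^ 2 := by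
  rw [← mulVec_mulVec, dotProduct_mulVec, ← star_star x, ← star_vecMul, star_star, dotProduct_comm,
    star_dotProduct_self_eq, Complex.ofReal_re]

lemma sum_norm_mulVec_sq_sq_le {p : Type*} [Fintype p] (F : Matrix n p ℂ) {y : p → ℂ}
    (hy : ∑ q, ‖y q‖ ^ 2 = 1) :
    (∑ i, ‖(F *ᵥ y) i‖ ^ 2) ^ 2 ≤ ∑ q, ‖(star (F *ᵥ y) ᵥ* F) q‖ ^ 2 := by
  set x := F *ᵥ y
  have hxx : ∑ i, ‖x i‖ ^ 2 = ‖star x ⬝ᵥ x‖ := by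
    rw [star_dotProduct_self_eq, Complex.norm_real, Real.norm_of_nonneg (by positivity)]
  have hcs := norm_star_dotProduct_sq_le (star (star x ᵥ* F)) y
  rw [star_star, ← dotProduct_mulVec, hy, mul_one] at hcs
  simpa [hxx] using hcs

lemma exists_unit_orthogonal {r : ℕ} (a : Fin r → n → ℂ) (hr : r < Fintype.card n) :
    ∃ w : n → ℂ, ∑ i, ‖w i‖ ^ 2 = 1 ∧ ∀ l, star w ⬝ᵥ a l = 0 := by
  have hker : LinearMap.ker (Matrix.of a).mulVecLin ≠ ⊥ :=
    LinearMap.ker_ne_bot_of_finrank_lt (by simpa using hr)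
  obtain ⟨z, hz, hz0⟩ := Submodule.exists_mem_ne_zero_of_ne_bot hker
  have hza : ∀ l, a l ⬝ᵥ z = 0 := fun l => congrFun (LinearMap.mem_ker.mp hz) l
  set s := ∑ i, ‖z i‖ ^ 2
  have hs : 0 < s := by
    obtain ⟨i, hi⟩ := Function.ne_iff.mp hz0
    exact lt_of_lt_of_le (by positivity) (Finset.single_le_sum (fun j _ => by positivity)
      (Finset.mem_univ i))
  refine ⟨((Real.sqrt s)⁻¹ : ℂ) • star z, ?_, fun l => ?_⟩
  · simp only [Pi.smul_apply, Pi.star_apply, smul_eq_mul, norm_mul, norm_star, mul_pow,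
      ← Finset.mul_sum]
    rw [norm_inv, Complex.norm_real, Real.norm_of_nonneg (Real.sqrt_nonneg _), inv_pow,
      Real.sq_sqrt hs.le, inv_mul_cancel₀ hs.ne']
  · rw [star_smul, star_star, smul_dotProduct, dotProduct_comm, hza, smul_zero]

lemma OrthonormalBasis.sum_norm_star_dotProduct_sq {ι : Type*} [Fintype ι]
    (b : OrthonormalBasis ι ℂ (EuclideanSpace ℂ n)) (x : n → ℂ) :
    ∑ m, ‖star ⇑(b m) ⬝ᵥ x‖ ^ 2 = ∑ i, ‖x i‖ ^ 2 := by
  simpa [EuclideanSpace.inner_eq_star_dotProduct, dotProduct_comm, EuclideanSpace.norm_sq_eq]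
    using b.sum_sq_norm_inner_right (WithLp.toLp 2 x)

lemma OrthonormalBasis.sum_norm_apply_sq {ι : Type*} [Fintype ι]
    (b : OrthonormalBasis ι ℂ (EuclideanSpace ℂ n)) (m : ι) : ∑ i, ‖b m i‖ ^ 2 = 1 := by
  rw [← EuclideanSpace.norm_sq_eq, b.orthonormal.1 m, one_pow]

end Vectors

section Rayleigh

variable {n : Type*} [Fintype n] [DecidableEq n] {A : Matrix n n ℂ}

lemma Matrix.IsHermitian.re_star_dotProduct_mulVec (hA : A.IsHermitian) (x : n → ℂ) :
    (star x ⬝ᵥ A *ᵥ x).re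
      = ∑ m, hA.eigenvalues m * ‖star ⇑(hA.eigenvectorBasis m) ⬝ᵥ x‖ ^ 2 := by
  have hAx : A *ᵥ x = ∑ m, ((star ⇑(hA.eigenvectorBasis m) ⬝ᵥ x) * hA.eigenvalues m) •
      ⇑(hA.eigenvectorBasis m) := by
    have hx : x = ∑ m, (star ⇑(hA.eigenvectorBasis m) ⬝ᵥ x) • ⇑(hA.eigenvectorBasis m) := by
      simpa [EuclideanSpace.inner_eq_star_dotProduct, dotProduct_comm]
        using congrArg WithLp.ofLp ((hA.eigenvectorBasis).sum_repr' (WithLp.toLp 2 x)).symm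
    conv_lhs => rw [hx]
    simp only [mulVec_sum, mulVec_smul, hA.mulVec_eigenvectorBasis,
      RCLike.real_smul_eq_coe_smul (K := ℂ), smul_smul]
    rfl
  rw [hAx, dotProduct_sum, Complex.re_sum]
  refine Finset.sum_congr rfl fun m _ => ?_
  have hself := Complex.mul_conj' (star ⇑(hA.eigenvectorBasis m) ⬝ᵥ x)
  rw [starRingEnd_apply] at hself
  rw [dotProduct_smul, star_dotProduct x, smul_eq_mul, mul_right_comm, hself,
    ← Complex.ofReal_pow, ← Complex.ofReal_mul, Complex.ofReal_re, mul_comm]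

lemma Matrix.IsHermitian.re_star_dotProduct_mulVec_le_s3 (hA : A.IsHermitian) {μ : ℝ} {x : n → ℂ}
    (hx : ∀ m, μ < hA.eigenvalues m → star ⇑(hA.eigenvectorBasis m) ⬝ᵥ x = 0) :
    (star x ⬝ᵥ A *ᵥ x).re ≤ μ * ∑ i, ‖x i‖ ^ 2 := by
  rw [hA.re_star_dotProduct_mulVec, ← (hA.eigenvectorBasis).sum_norm_star_dotProduct_sq,
    Finset.mul_sum]
  refine Finset.sum_le_sum fun m _ => ?_
  rcases le_or_gt (hA.eigenvalues m) μ with hm | hm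
  · gcongr
  · simp [hx m hm]

lemma Matrix.IsHermitian.le_re_star_dotProduct_mulVec (hA : A.IsHermitian) {μ : ℝ} {x : n → ℂ}
    (hx : ∀ m, hA.eigenvalues m < μ → star ⇑(hA.eigenvectorBasis m) ⬝ᵥ x = 0) :
    μ * ∑ i, ‖x i‖ ^ 2 ≤ (star x ⬝ᵥ A *ᵥ x).re := by
  rw [hA.re_star_dotProduct_mulVec, ← (hA.eigenvectorBasis).sum_norm_star_dotProduct_sq,
    Finset.mul_sum]
  refine Finset.sum_le_sum fun m _ => ?_
  rcases le_or_gt μ (hA.eigenvalues m) with hm | hm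
  · gcongr
  · simp [hx m hm]

lemma Matrix.IsHermitian.re_star_dotProduct_mulVec_eigenvectorBasis (hA : A.IsHermitian) (m : n) :
    (star ⇑(hA.eigenvectorBasis m) ⬝ᵥ A *ᵥ ⇑(hA.eigenvectorBasis m)).re = hA.eigenvalues m := by
  rw [hA.mulVec_eigenvectorBasis, RCLike.real_smul_eq_coe_smul (K := ℂ), dotProduct_smul,
    star_dotProduct_self_eq, (hA.eigenvectorBasis).sum_norm_apply_sq]
  simp

end Rayleigh

section IsOrderedSpectrum

variable {M : Matrix (Fin 3) (Fin 3) ℂ} {l : Fin 3 → ℝ}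

lemma IsOrderedSpectrum.exists_perm (h : IsOrderedSpectrum M l) (hM : M.IsHermitian) :
    ∃ σ : Equiv.Perm (Fin 3), ∀ i, l i = hM.eigenvalues (σ i) := by
  obtain ⟨-, _, σ, hσ⟩ := h
  exact ⟨σ, hσ⟩

lemma IsOrderedSpectrum.sum_eq_trace (h : IsOrderedSpectrum M l) :
    ((l 0 + l 1 + l 2 : ℝ) : ℂ) = M.trace := by
  obtain ⟨-, hM, σ, hσ⟩ := h
  rw [hM.trace_eq_sum_eigenvalues, ← Equiv.sum_comp σ, Fin.sum_univ_three, hσ, hσ, hσ]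
  push_cast
  rfl

lemma IsOrderedSpectrum.nonneg (h : IsOrderedSpectrum M l) (hM : M.PosSemidef) (i : Fin 3) :
    0 ≤ l i := by
  obtain ⟨σ, hσ⟩ := h.exists_perm hM.1
  rw [hσ]
  exact hM.eigenvalues_nonneg _

lemma IsOrderedSpectrum.exists_top (h : IsOrderedSpectrum M l) (hM : M.IsHermitian) :
    ∃ m₂, hM.eigenvalues m₂ = l 2 ∧ ∀ m ≠ m₂, hM.eigenvalues m ≤ l 1 := by
  obtain ⟨σ, hσ⟩ := h.exists_perm hM
  refine ⟨σ 2, (hσ 2).symm, fun m hm => ?_⟩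
  obtain ⟨i, rfl⟩ := σ.surjective m
  rw [← hσ]
  fin_cases i
  · exact h.1 (by decide)
  · exact le_rfl
  · exact absurd rfl hm

lemma IsOrderedSpectrum.exists_bot (h : IsOrderedSpectrum M l) (hM : M.IsHermitian) :
    ∃ m₀, ∀ m ≠ m₀, l 1 ≤ hM.eigenvalues m := by
  obtain ⟨σ, hσ⟩ := h.exists_perm hM
  refine ⟨σ 0, fun m hm => ?_⟩
  obtain ⟨i, rfl⟩ := σ.surjective m
  rw [← hσ]
  fin_cases i
  · exact absurd rfl hm
  · exact le_rfl
  · exact h.1 (by decide)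

end IsOrderedSpectrum

section ThreeQutrit

variable (c : Fin 3 → Fin 3 → Fin 3 → ℂ)

def flattening : Matrix (Fin 3) (Fin 3 × Fin 3) ℂ := of fun i p => c i p.1 p.2

lemma rho1_eq_flattening_mul_conjTranspose : rho1 c = flattening c * (flattening c)ᴴ := by
  ext i i'
  simp [rho1, flattening, mul_apply, Fintype.sum_prod_type]

lemma rho1_posSemidef : (rho1 c).PosSemidef := by
  rw [rho1_eq_flattening_mul_conjTranspose]
  exact posSemidef_self_mul_conjTranspose _

lemma re_star_dotProduct_rho1_mulVec (x : Fin 3 → ℂ) :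
    (star x ⬝ᵥ rho1 c *ᵥ x).re = ∑ j, ∑ k, ‖∑ i, star (x i) * c i j k‖ ^ 2 := by
  rw [rho1_eq_flattening_mul_conjTranspose, re_star_dotProduct_mul_conjTranspose_mulVec,
    Fintype.sum_prod_type]
  rfl

lemma trace_rho1 : (rho1 c).trace = ((∑ i, ∑ j, ∑ k, ‖c i j k‖ ^ 2 : ℝ) : ℂ) := by
  simp [trace, rho1, Complex.mul_conj']

lemma trace_rho2 : (rho2 c).trace = (rho1 c).trace := by
  simp only [trace, diag, rho1, rho2, of_apply]
  exact Finset.sum_comm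

lemma trace_rho3 : (rho3 c).trace = (rho1 c).trace := by
  simp only [trace, diag, rho1, rho3, of_apply]
  rw [Finset.sum_comm]
  exact Finset.sum_congr rfl fun _ _ => Finset.sum_comm

lemma rho1_swap23 : rho1 (fun i j k => c i k j) = rho1 c := by
  ext i i'
  simp only [rho1, of_apply]
  exact Finset.sum_comm

lemma rho3_swap12 : rho3 (fun i j k => c j i k) = rho3 c := by
  ext k k'
  simp only [rho3, of_apply]
  exact Finset.sum_comm

def partialInner (v w : Fin 3 → ℂ) : Fin 3 → ℂ := fun i => star v ⬝ᵥ c i *ᵥ star w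

variable {c} {v w : Fin 3 → ℂ}

lemma re_rho2_add_re_rho3_le (hv : ∑ j, ‖v j‖ ^ 2 = 1) (hw : ∑ k, ‖w k‖ ^ 2 = 1) :
    (star v ⬝ᵥ rho2 c *ᵥ v).re + (star w ⬝ᵥ rho3 c *ᵥ w).re
      ≤ ∑ i, ∑ j, ∑ k, ‖c i j k‖ ^ 2 + ∑ i, ‖partialInner c v w i‖ ^ 2 := by
  have h2 : (star v ⬝ᵥ rho2 c *ᵥ v).re = ∑ i, ∑ k, ‖(star v ᵥ* c i) k‖ ^ 2 :=
    re_star_dotProduct_rho1_mulVec (fun i j k => c j i k) v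
  have h3 : (star w ⬝ᵥ rho3 c *ᵥ w).re = ∑ i, ∑ j, ‖(c i *ᵥ star w) j‖ ^ 2 := by
    rw [show rho3 c = rho1 (fun i j k => c j k i) from rfl, re_star_dotProduct_rho1_mulVec]
    simp [mulVec, dotProduct, mul_comm]
  rw [h2, h3, ← Finset.sum_add_distrib, ← Finset.sum_add_distrib]
  exact Finset.sum_le_sum fun i _ => sum_norm_vecMul_sq_add_sum_norm_mulVec_sq_le (c i) hv hw

lemma partialInner_eq_flattening_mulVec :
    partialInner c v w = flattening c *ᵥ fun p => star (v p.1 * w p.2) := by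
  ext i
  simp [partialInner, flattening, mulVec, dotProduct, Fintype.sum_prod_type, Finset.mul_sum,
    mul_left_comm]

lemma star_dotProduct_partialInner (u : Fin 3 → ℂ) :
    star u ⬝ᵥ partialInner c v w
      = star w ⬝ᵥ fun k => ∑ i, ∑ j, star (u i) * star (v j) * c i j k := by
  simp only [partialInner, dotProduct, mulVec, Pi.star_apply, Finset.mul_sum]
  conv_rhs => rw [Finset.sum_comm]
  refine Finset.sum_congr rfl fun i _ => ?_
  rw [Finset.sum_comm]
  exact Finset.sum_congr rfl fun j _ => Finset.sum_congr rfl fun k _ => by ring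

lemma sq_sum_norm_partialInner_sq_le (hv : ∑ j, ‖v j‖ ^ 2 = 1) (hw : ∑ k, ‖w k‖ ^ 2 = 1) :
    (∑ i, ‖partialInner c v w i‖ ^ 2) ^ 2
      ≤ (star (partialInner c v w) ⬝ᵥ rho1 c *ᵥ partialInner c v w).re := by
  have hy : ∑ p : Fin 3 × Fin 3, ‖star (v p.1 * w p.2)‖ ^ 2 = 1 := by
    simp [Fintype.sum_prod_type, mul_pow, ← Finset.mul_sum, hv, hw]
  rw [rho1_eq_flattening_mul_conjTranspose, re_star_dotProduct_mul_conjTranspose_mulVec,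
    partialInner_eq_flattening_mulVec]
  exact sum_norm_mulVec_sq_sq_le _ hy

theorem rho2_max_add_rho3_mid_le {f g h : Fin 3 → ℝ} (h1 : IsOrderedSpectrum (rho1 c) f)
    (h2 : IsOrderedSpectrum (rho2 c) g) (h3 : IsOrderedSpectrum (rho3 c) h) :
    g 2 + h 1 ≤ f 0 + 2 * f 1 + f 2 := by
  have H1 := h1.2.1
  have H2 := h2.2.1
  have H3 := h3.2.1
  obtain ⟨m₁, -, hm₁⟩ := h1.exists_top H1
  obtain ⟨m₂, hm₂, -⟩ := h2.exists_top H2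
  obtain ⟨m₃, hm₃⟩ := h3.exists_bot H3
  set u := ⇑(H1.eigenvectorBasis m₁)
  set v := ⇑(H2.eigenvectorBasis m₂)
  set a : Fin 3 → ℂ := fun k => ∑ i, ∑ j, star (u i) * star (v j) * c i j k
  obtain ⟨w, hw, hwa⟩ := exists_unit_orthogonal ![a, ⇑(H3.eigenvectorBasis m₃)] (by simp)
  have hwb : star w ⬝ᵥ ⇑(H3.eigenvectorBasis m₃) = 0 := hwa 1
  have hv := (H2.eigenvectorBasis).sum_norm_apply_sq m₂
  set x := partialInner c v w
  have hg : g 2 = (star v ⬝ᵥ rho2 c *ᵥ v).re := by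
    rw [H2.re_star_dotProduct_mulVec_eigenvectorBasis, hm₂]
  have hh : h 1 ≤ (star w ⬝ᵥ rho3 c *ᵥ w).re := by
    have hRayleigh := H3.le_re_star_dotProduct_mulVec (μ := h 1) (x := w) fun m hm => by
      obtain rfl : m = m₃ := by_contra fun hne => (hm₃ m hne).not_gt hm
      rw [star_dotProduct, hwb, star_zero]
    rwa [hw, mul_one] at hRayleigh
  have hux : star u ⬝ᵥ x = 0 := (star_dotProduct_partialInner u).trans (hwa 0)
  have hx : ∑ i, ‖x i‖ ^ 2 ≤ f 1 := by
    have hRayleigh := H1.re_star_dotProduct_mulVec_le_s3 (μ := f 1) (x := x) fun m hm => by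
      obtain rfl : m = m₁ := by_contra fun hne => (hm₁ m hne).not_gt hm
      exact hux
    have hgram := sq_sum_norm_partialInner_sq_le (c := c) hv hw
    have hf1 := h1.nonneg (rho1_posSemidef c) 1
    nlinarith
  have hN : ∑ i, ∑ j, ∑ k, ‖c i j k‖ ^ 2 = f 0 + f 1 + f 2 := by
    exact_mod_cast (trace_rho1 c).symm.trans h1.sum_eq_trace.symm
  linarith [re_rho2_add_re_rho3_le (c := c) hv hw]

theorem rho3_max_add_rho2_mid_le {f g h : Fin 3 → ℝ} (h1 : IsOrderedSpectrum (rho1 c) f)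
    (h2 : IsOrderedSpectrum (rho2 c) g) (h3 : IsOrderedSpectrum (rho3 c) h) :
    h 2 + g 1 ≤ f 0 + 2 * f 1 + f 2 :=
  rho2_max_add_rho3_mid_le (c := fun i j k => c i k j) ((rho1_swap23 c).symm ▸ h1) h3 h2

variable {l : Fin 3 → Fin 3 → ℝ}

theorem max_add_mid_le_of_ne (h1 : IsOrderedSpectrum (rho1 c) (l 0))
    (h2 : IsOrderedSpectrum (rho2 c) (l 1)) (h3 : IsOrderedSpectrum (rho3 c) (l 2))
    {a b c' : Fin 3} (hab : a ≠ b) (hac : a ≠ c') (hbc : b ≠ c') :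
    l b 2 + l c' 1 ≤ l a 0 + 2 * l a 1 + l a 2 := by
  -- `rho2` and `rho3` of a tensor are definitionally `rho1` of the tensor with relabelled legs
  have e₁ : rho3 (fun i j k => c j i k) = rho3 c := rho3_swap12 c
  have e₂ : rho2 (fun i j k => c j k i) = rho1 c := rho1_swap23 c
  have e₃ : rho3 (fun i j k => c j k i) = rho2 c := rho3_swap12 (fun i j k => c i k j)
  have k012 := rho2_max_add_rho3_mid_le h1 h2 h3
  have k021 := rho3_max_add_rho2_mid_le h1 h2 h3
  have k102 := rho2_max_add_rho3_mid_le (c := fun i j k => c j i k) h2 h1 (e₁ ▸ h3)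
  have k120 := rho3_max_add_rho2_mid_le (c := fun i j k => c j i k) h2 h1 (e₁ ▸ h3)
  have k201 := rho2_max_add_rho3_mid_le (c := fun i j k => c j k i) h3 (e₂ ▸ h1) (e₃ ▸ h2)
  have k210 := rho3_max_add_rho2_mid_le (c := fun i j k => c j k i) h3 (e₂ ▸ h1) (e₃ ▸ h2)
  fin_cases a <;> fin_cases b <;> fin_cases c' <;> simp_all

lemma sum_spectrum_eq_trace (h1 : IsOrderedSpectrum (rho1 c) (l 0))
    (h2 : IsOrderedSpectrum (rho2 c) (l 1)) (h3 : IsOrderedSpectrum (rho3 c) (l 2)) (a : Fin 3) :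
    ((l a 0 + l a 1 + l a 2 : ℝ) : ℂ) = (rho1 c).trace := by
  fin_cases a
  · exact h1.sum_eq_trace
  · exact h2.sum_eq_trace.trans (trace_rho2 c)
  · exact h3.sum_eq_trace.trans (trace_rho3 c)

end ThreeQutrit

theorem three_qutrit_ineq2_general (c : Fin 3 → Fin 3 → Fin 3 → ℂ)
    (l : Fin 3 → Fin 3 → ℝ)
    (h1 : IsOrderedSpectrum (rho1 c) (l 0))
    (h2 : IsOrderedSpectrum (rho2 c) (l 1))
    (h3 : IsOrderedSpectrum (rho3 c) (l 2)) :
    ∀ a b c' : Fin 3, a ≠ b → a ≠ c' → b ≠ c' →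
      l a 2 + l a 0 ≤ l b 1 + l b 0 + l c' 2 + l c' 0 := by
  intro a b c' hab hac hbc
  have htrace := sum_spectrum_eq_trace h1 h2 h3
  have hab' : l a 0 + l a 1 + l a 2 = l b 0 + l b 1 + l b 2 :=
    Complex.ofReal_injective ((htrace a).trans (htrace b).symm)
  have hac' : l a 0 + l a 1 + l a 2 = l c' 0 + l c' 1 + l c' 2 :=
    Complex.ofReal_injective ((htrace a).trans (htrace c').symm)
  linarith [max_add_mid_le_of_ne h1 h2 h3 hab hac hbc]

theorem three_qutrit_ineq2 (c : Fin 3 → Fin 3 → Fin 3 → ℂ)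
    (hnorm : ∑ i : Fin 3, ∑ j : Fin 3, ∑ k : Fin 3, ‖c i j k‖ ^ 2 = 1)
    (l : Fin 3 → Fin 3 → ℝ)
    (h1 : IsOrderedSpectrum (rho1 c) (l 0))
    (h2 : IsOrderedSpectrum (rho2 c) (l 1))
    (h3 : IsOrderedSpectrum (rho3 c) (l 2)) :
    ∀ a b c' : Fin 3, a ≠ b → a ≠ c' → b ≠ c' →
      l a 2 + l a 0 ≤ l b 1 + l b 0 + l c' 2 + l c' 0 :=
  three_qutrit_ineq2_general c l h1 h2 h3
end

section
/- For any pure three-qutrit state, with λ_1^{(a)} ≤ λ_2^{(a)} ≤ λ_3^{(a)} the increasingly ordered eigenvalues of the a-th one-particle reduced density matrix, the inequality λ_2^{(b)} + λ_3^{(c)} ≥ λ_2^{(a)} holds for every permutation (a,b,c) of (1,2,3). -/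
open scoped BigOperators

/-!
Diagonalise `ρ⁽¹⁾` with orthonormal eigenvectors `e₁, e₂, e₃` and cut the state into the slices
`Sᵢ = (⟨eᵢ| ⊗ 1 ⊗ 1) ψ`, viewed as `3 × 3` matrices. Then `tr (Sᵢ Sᵢᴴ) = λ⁽¹⁾ᵢ`,
`ρ⁽²⁾ = ∑ Sᵢ Sᵢᴴ` and `(ρ⁽³⁾)ᵀ = ∑ Sᵢᴴ Sᵢ`. The last identity gives `‖Sᵢ‖² ≤ λ⁽³⁾₃`, hence
`Sᵢ Sᵢᴴ ≤ λ⁽³⁾₃`. So `B = S₃ S₃ᴴ + S₂ S₂ᴴ ≤ ρ⁽²⁾` has trace `λ⁽¹⁾₃ + λ⁽¹⁾₂` and eigenvalues at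
most `2 λ⁽³⁾₃`; its two largest eigenvalues are then at least
`(λ⁽¹⁾₃ + λ⁽¹⁾₂) / 2 - λ⁽³⁾₃ ≥ λ⁽¹⁾₂ - λ⁽³⁾₃`, and by min-max so is `λ⁽²⁾₂`. Permuting the legs of
the tensor gives the other orderings of the parties. (In the code eigenvalues are indexed from 0.)
-/

open Matrix
open scoped MatrixOrder ComplexOrder

section Rayleigh

variable {𝕜 n : Type*} [RCLike 𝕜] [Fintype n] [DecidableEq n] {A : Matrix n n 𝕜}

namespace Matrix.IsHermitian

theorem eq_sum_dotProduct_smul_eigenvectorBasis (hA : A.IsHermitian) (x : n → 𝕜) :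
    x = ∑ i, (star ⇑(hA.eigenvectorBasis i) ⬝ᵥ x) • ⇑(hA.eigenvectorBasis i) := by
  simpa [EuclideanSpace.inner_eq_star_dotProduct, dotProduct_comm] using
    (congrArg WithLp.ofLp (hA.eigenvectorBasis.sum_repr' (WithLp.toLp 2 x))).symm

theorem re_dotProduct_mulVec_eq_sum (hA : A.IsHermitian) (x : n → 𝕜) :
    RCLike.re (star x ⬝ᵥ (A *ᵥ x)) =
      ∑ i, hA.eigenvalues i * ‖star ⇑(hA.eigenvectorBasis i) ⬝ᵥ x‖ ^ 2 := by
  set b := hA.eigenvectorBasis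
  have hAx : A *ᵥ x = ∑ i, (star ⇑(b i) ⬝ᵥ x) • hA.eigenvalues i • ⇑(b i) := by
    conv_lhs => rw [hA.eq_sum_dotProduct_smul_eigenvectorBasis x]
    simp only [mulVec_sum, mulVec_smul, mulVec_eigenvectorBasis, b]
  rw [hAx]
  simp only [dotProduct_sum, dotProduct_smul, map_sum]
  refine Finset.sum_congr rfl fun i _ => ?_
  rw [← star_star x, star_dotProduct_star, star_star, smul_eq_mul, RCLike.real_smul_eq_coe_mul,
    mul_left_comm, RCLike.star_def, RCLike.conj_mul, RCLike.norm_conj, ← RCLike.ofReal_pow,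
    ← RCLike.ofReal_mul, RCLike.ofReal_re]

theorem sum_norm_sq_eq_sum_eigenvectorBasis (hA : A.IsHermitian) (x : n → 𝕜) :
    ∑ j, ‖x j‖ ^ 2 = ∑ i, ‖star ⇑(hA.eigenvectorBasis i) ⬝ᵥ x‖ ^ 2 := by
  have := hA.eigenvectorBasis.sum_sq_norm_inner_right (WithLp.toLp 2 x)
  simp only [EuclideanSpace.norm_sq_eq, EuclideanSpace.inner_eq_star_dotProduct,
    dotProduct_comm x] at this
  exact this.symm

theorem re_dotProduct_mulVec_le (hA : A.IsHermitian) {x : n → 𝕜} {t : ℝ}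
    (h : ∀ i, star ⇑(hA.eigenvectorBasis i) ⬝ᵥ x ≠ 0 → hA.eigenvalues i ≤ t) :
    RCLike.re (star x ⬝ᵥ (A *ᵥ x)) ≤ t * ∑ j, ‖x j‖ ^ 2 := by
  rw [hA.re_dotProduct_mulVec_eq_sum, hA.sum_norm_sq_eq_sum_eigenvectorBasis, Finset.mul_sum]
  refine Finset.sum_le_sum fun i _ => ?_
  by_cases hi : star ⇑(hA.eigenvectorBasis i) ⬝ᵥ x = 0
  · simp [hi]
  · exact mul_le_mul_of_nonneg_right (h i hi) (by positivity)

theorem le_re_dotProduct_mulVec (hA : A.IsHermitian) {x : n → 𝕜} {t : ℝ}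
    (h : ∀ i, star ⇑(hA.eigenvectorBasis i) ⬝ᵥ x ≠ 0 → t ≤ hA.eigenvalues i) :
    t * ∑ j, ‖x j‖ ^ 2 ≤ RCLike.re (star x ⬝ᵥ (A *ᵥ x)) := by
  rw [hA.re_dotProduct_mulVec_eq_sum, hA.sum_norm_sq_eq_sum_eigenvectorBasis, Finset.mul_sum]
  refine Finset.sum_le_sum fun i _ => ?_
  by_cases hi : star ⇑(hA.eigenvectorBasis i) ⬝ᵥ x = 0
  · simp [hi]
  · exact mul_le_mul_of_nonneg_right (h i hi) (by positivity)

theorem eigenvalues_le_of_re_dotProduct_mulVec_le (hA : A.IsHermitian) {t : ℝ}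
    (h : ∀ x, RCLike.re (star x ⬝ᵥ (A *ᵥ x)) ≤ t * ∑ j, ‖x j‖ ^ 2) (i : n) :
    hA.eigenvalues i ≤ t := by
  have hunit : ∑ j, ‖hA.eigenvectorBasis i j‖ ^ 2 = 1 := by
    rw [← EuclideanSpace.norm_sq_eq, hA.eigenvectorBasis.orthonormal.1 i, one_pow]
  simpa [hA.eigenvalues_eq i, hunit] using h (hA.eigenvectorBasis i)

end Matrix.IsHermitian

end Rayleigh

section Gram

variable {𝕜 m n : Type*} [RCLike 𝕜] [Fintype m] [Fintype n]

theorem Matrix.re_dotProduct_conjTranspose_mul_self_mulVec (X : Matrix m n 𝕜) (f : n → 𝕜) :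
    RCLike.re (star f ⬝ᵥ ((Xᴴ * X) *ᵥ f)) = ∑ i, ‖(X *ᵥ f) i‖ ^ 2 := by
  rw [← mulVec_mulVec, dotProduct_mulVec, ← star_mulVec]
  simp only [dotProduct, Pi.star_apply, RCLike.star_def, RCLike.conj_mul, map_sum]
  norm_cast

open scoped Matrix.Norms.L2Operator in
theorem Matrix.sum_norm_sq_conjTranspose_mulVec_le {X : Matrix m n 𝕜} {t : ℝ}
    (ht : 0 ≤ t) (h : ∀ f, ∑ i, ‖(X *ᵥ f) i‖ ^ 2 ≤ t * ∑ j, ‖f j‖ ^ 2) (g : m → 𝕜) :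
    ∑ j, ‖(Xᴴ *ᵥ g) j‖ ^ 2 ≤ t * ∑ i, ‖g i‖ ^ 2 := by
  classical
  have hX : ‖X‖ ≤ √t := by
    rw [l2_opNorm_def]
    refine ContinuousLinearMap.opNorm_le_bound _ (Real.sqrt_nonneg t) fun f => ?_
    rw [← Real.sqrt_sq (norm_nonneg f), ← Real.sqrt_mul ht, ← Real.sqrt_sq (norm_nonneg _)]
    gcongr
    simpa [EuclideanSpace.norm_sq_eq] using h f
  have hXg := (l2_opNorm_mulVec Xᴴ (WithLp.toLp 2 g)).trans
    (mul_le_mul_of_nonneg_right ((l2_opNorm_conjTranspose X).le.trans hX) (norm_nonneg _))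
  have hsq := pow_le_pow_left₀ (norm_nonneg _) hXg 2
  rw [mul_pow, Real.sq_sqrt ht] at hsq
  simpa [EuclideanSpace.norm_sq_eq] using hsq

end Gram

theorem exists_ne_zero_dotProduct_eq_zero_of_two_lt_card {K n : Type*} [Field K] [Fintype n]
    (hn : 2 < Fintype.card n) (a b : n → K) :
    ∃ y ≠ 0, a ⬝ᵥ y = 0 ∧ b ⬝ᵥ y = 0 := by
  have hker := LinearMap.ker_ne_bot_of_finrank_lt (f := (of ![a, b]).mulVecLin) (by simpa using hn)
  obtain ⟨y, hy, hy0⟩ := (Submodule.ne_bot_iff _).mp hker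
  have hy' : of ![a, b] *ᵥ y = 0 := hy
  exact ⟨y, hy0, by simpa using congrFun hy' 0, by simpa using congrFun hy' 1⟩

theorem exists_forall_ne_sum_sub_div_two_le (ν : Fin 3 → ℝ) {T : ℝ} (hT : ∀ i, ν i ≤ T) :
    ∃ j, ∀ i ≠ j, (∑ k, ν k - T) / 2 ≤ ν i := by
  obtain ⟨j, hj⟩ := Finite.exists_min ν
  refine ⟨j, fun i hij => ?_⟩
  rw [Fin.sum_univ_three]
  fin_cases i <;> fin_cases j <;>
    first | exact absurd rfl hij | (simp at hj ⊢; linarith [hT 0, hT 1, hT 2, hj 0, hj 1, hj 2])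

namespace IsOrderedSpectrum

variable {M : Matrix (Fin 3) (Fin 3) ℂ} {l : Fin 3 → ℝ}

theorem isHermitian (h : IsOrderedSpectrum M l) : M.IsHermitian :=
  h.2.1

theorem exists_orthonormalBasis_re_dotProduct_mulVec_eq (h : IsOrderedSpectrum M l) :
    ∃ b : OrthonormalBasis (Fin 3) ℂ (EuclideanSpace ℂ (Fin 3)),
      ∀ i, RCLike.re (star ⇑(b i) ⬝ᵥ (M *ᵥ ⇑(b i))) = l i := by
  obtain ⟨-, hM, σ, hl⟩ := h
  exact ⟨hM.eigenvectorBasis.reindex σ.symm, fun i => by simp [hl, hM.eigenvalues_eq]⟩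

theorem re_dotProduct_mulVec_le_top (h : IsOrderedSpectrum M l) (x : Fin 3 → ℂ) :
    RCLike.re (star x ⬝ᵥ (M *ᵥ x)) ≤ l 2 * ∑ j, ‖x j‖ ^ 2 := by
  obtain ⟨hl, hM, σ, hσ⟩ := h
  exact hM.re_dotProduct_mulVec_le fun i _ => by simpa [hσ] using hl (Fin.le_last (σ.symm i))

theorem exists_eigenvalues_le_middle (h : IsOrderedSpectrum M l) (hM : M.IsHermitian) :
    ∃ j, ∀ i ≠ j, hM.eigenvalues i ≤ l 1 := by
  obtain ⟨hl, _, σ, hσ⟩ := h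
  refine ⟨σ 2, fun i hi => ?_⟩
  have : σ.symm i ≠ 2 := fun h2 => hi (by rw [← h2, Equiv.apply_symm_apply])
  simpa [hσ] using hl (show σ.symm i ≤ 1 by omega)

theorem le_middle_of_le (h : IsOrderedSpectrum M l) {A : Matrix (Fin 3) (Fin 3) ℂ}
    (hA : A.IsHermitian) {s : ℝ} {j : Fin 3} (hs : ∀ i ≠ j, s ≤ hA.eigenvalues i) (hAM : A ≤ M) :
    s ≤ l 1 := by
  have hM := h.isHermitian
  obtain ⟨k, hk⟩ := h.exists_eigenvalues_le_middle hM
  obtain ⟨y, hy0, hyA, hyM⟩ := exists_ne_zero_dotProduct_eq_zero_of_two_lt_card (by simp)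
    (star ⇑(hA.eigenvectorBasis j)) (star ⇑(hM.eigenvectorBasis k))
  have hpos : 0 < ∑ i, ‖y i‖ ^ 2 := by
    obtain ⟨i, hi⟩ := Function.ne_iff.mp hy0
    exact Finset.sum_pos' (fun _ _ => by positivity) ⟨i, Finset.mem_univ _, by positivity⟩
  have hlow : s * ∑ i, ‖y i‖ ^ 2 ≤ RCLike.re (star y ⬝ᵥ (A *ᵥ y)) :=
    hA.le_re_dotProduct_mulVec fun i hi => hs i (by rintro rfl; exact hi hyA)
  have hmono : RCLike.re (star y ⬝ᵥ (A *ᵥ y)) ≤ RCLike.re (star y ⬝ᵥ (M *ᵥ y)) := by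
    have := hAM.re_dotProduct_nonneg y
    rwa [sub_mulVec, dotProduct_sub, map_sub, sub_nonneg] at this
  have hup : RCLike.re (star y ⬝ᵥ (M *ᵥ y)) ≤ l 1 * ∑ i, ‖y i‖ ^ 2 :=
    hM.re_dotProduct_mulVec_le fun i hi => hk i (by rintro rfl; exact hi hyM)
  exact le_of_mul_le_mul_right (hlow.trans (hmono.trans hup)) hpos

end IsOrderedSpectrum

theorem OrthonormalBasis.sum_star_dotProduct_mul_star {𝕜 ι : Type*} [RCLike 𝕜] [Fintype ι]
    (b : OrthonormalBasis ι 𝕜 (EuclideanSpace 𝕜 ι)) (f g : ι → 𝕜) :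
    ∑ m, (star ⇑(b m) ⬝ᵥ f) * star (star ⇑(b m) ⬝ᵥ g) = star g ⬝ᵥ f := by
  have := b.sum_inner_mul_inner (WithLp.toLp 2 g) (WithLp.toLp 2 f)
  simp only [EuclideanSpace.inner_eq_star_dotProduct] at this
  rw [dotProduct_comm, ← this]
  refine Finset.sum_congr rfl fun m _ => ?_
  rw [mul_comm, ← star_dotProduct_star, star_star, dotProduct_comm f, dotProduct_comm (star g)]

def slice {𝕜 ι κ μ : Type*} [RCLike 𝕜] [Fintype ι] (c : ι → κ → μ → 𝕜) (e : ι → 𝕜) :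
    Matrix κ μ 𝕜 :=
  of fun j k => star e ⬝ᵥ fun i => c i j k

section Slices

variable (c : Fin 3 → Fin 3 → Fin 3 → ℂ)

theorem rho1_eq_sum_vecMulVec :
    rho1 c = ∑ j, ∑ k, vecMulVec (fun i => c i j k) (star fun i => c i j k) := by
  ext i i'
  simp [rho1, Matrix.sum_apply, vecMulVec_apply]

theorem trace_slice_mul_conjTranspose (e : Fin 3 → ℂ) :
    (slice c e * (slice c e)ᴴ).trace = star e ⬝ᵥ (rho1 c *ᵥ e) := by
  simp only [rho1_eq_sum_vecMulVec, sum_mulVec, dotProduct_sum, vecMulVec_mulVec, trace, diag,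
    mul_apply, conjTranspose_apply, slice, of_apply]
  refine Finset.sum_congr rfl fun j _ => Finset.sum_congr rfl fun k _ => ?_
  rw [← star_dotProduct_star, star_star, op_smul_eq_smul, dotProduct_smul, smul_eq_mul, mul_comm]

theorem rho2_eq_sum_slice (b : OrthonormalBasis (Fin 3) ℂ (EuclideanSpace ℂ (Fin 3))) :
    rho2 c = ∑ m, slice c (b m) * (slice c (b m))ᴴ := by
  ext j j'
  rw [Matrix.sum_apply]
  simp_rw [mul_apply, conjTranspose_apply]
  rw [Finset.sum_comm]
  simp_rw [slice, of_apply, b.sum_star_dotProduct_mul_star]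
  simp only [rho2, of_apply, dotProduct, Pi.star_apply, RCLike.star_def]
  rw [Finset.sum_comm]
  simp only [mul_comm]

theorem transpose_rho3_eq_sum_slice (b : OrthonormalBasis (Fin 3) ℂ (EuclideanSpace ℂ (Fin 3))) :
    (rho3 c)ᵀ = ∑ m, (slice c (b m))ᴴ * slice c (b m) := by
  ext k k'
  rw [Matrix.sum_apply]
  simp_rw [mul_apply, conjTranspose_apply]
  rw [Finset.sum_comm]
  simp_rw [mul_comm (star _), slice, of_apply, b.sum_star_dotProduct_mul_star]
  simp only [transpose_apply, rho3, of_apply, dotProduct, Pi.star_apply, RCLike.star_def]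
  rw [Finset.sum_comm]
  simp only [mul_comm]

end Slices

theorem sum_norm_sq_slice_mulVec_le {c : Fin 3 → Fin 3 → Fin 3 → ℂ} {l : Fin 3 → ℝ}
    (h : IsOrderedSpectrum (rho3 c) l) (b : OrthonormalBasis (Fin 3) ℂ (EuclideanSpace ℂ (Fin 3)))
    (i : Fin 3) (f : Fin 3 → ℂ) :
    ∑ j, ‖(slice c (b i) *ᵥ f) j‖ ^ 2 ≤ l 2 * ∑ j, ‖f j‖ ^ 2 :=
  calc ∑ j, ‖(slice c (b i) *ᵥ f) j‖ ^ 2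
      ≤ ∑ m, ∑ j, ‖(slice c (b m) *ᵥ f) j‖ ^ 2 :=
        Finset.single_le_sum (f := fun m => ∑ j, ‖(slice c (b m) *ᵥ f) j‖ ^ 2)
          (fun m _ => by positivity) (Finset.mem_univ i)
    _ = RCLike.re (star f ⬝ᵥ ((rho3 c)ᵀ *ᵥ f)) := by
        simp [transpose_rho3_eq_sum_slice c b, sum_mulVec, dotProduct_sum,
          re_dotProduct_conjTranspose_mul_self_mulVec]
    _ = RCLike.re (star (star f) ⬝ᵥ (rho3 c *ᵥ star f)) := by
        rw [dotProduct_transpose_mulVec, star_star]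
    _ ≤ l 2 * ∑ j, ‖f j‖ ^ 2 := by
        simpa using h.re_dotProduct_mulVec_le_top (star f)

theorem middle_le_middle_add_top {c : Fin 3 → Fin 3 → Fin 3 → ℂ} {lA lB lC : Fin 3 → ℝ}
    (hA : IsOrderedSpectrum (rho1 c) lA) (hB : IsOrderedSpectrum (rho2 c) lB)
    (hC : IsOrderedSpectrum (rho3 c) lC) :
    lA 1 ≤ lB 1 + lC 2 := by
  obtain ⟨b, hb⟩ := hA.exists_orthonormalBasis_re_dotProduct_mulVec_eq
  set S : Fin 3 → Matrix (Fin 3) (Fin 3) ℂ := fun i => slice c (b i)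
  have ht : 0 ≤ lC 2 := by
    have := (Finset.sum_nonneg fun j _ => by positivity).trans
      (sum_norm_sq_slice_mulVec_le hC b 0 (Pi.single 0 1))
    simpa [Pi.single_apply, apply_ite] using this
  have hSH : ∀ i g, ∑ j, ‖((S i)ᴴ *ᵥ g) j‖ ^ 2 ≤ lC 2 * ∑ j, ‖g j‖ ^ 2 :=
    fun i => sum_norm_sq_conjTranspose_mulVec_le ht (sum_norm_sq_slice_mulVec_le hC b i)
  set B := S 2 * (S 2)ᴴ + S 1 * (S 1)ᴴ
  have hB' : B.IsHermitian :=
    ((posSemidef_self_mul_conjTranspose _).add (posSemidef_self_mul_conjTranspose _)).isHermitian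
  have hBeig : ∀ i, hB'.eigenvalues i ≤ 2 * lC 2 :=
    hB'.eigenvalues_le_of_re_dotProduct_mulVec_le fun x => by
      have h2 := re_dotProduct_conjTranspose_mul_self_mulVec (S 2)ᴴ x
      have h1 := re_dotProduct_conjTranspose_mul_self_mulVec (S 1)ᴴ x
      rw [conjTranspose_conjTranspose] at h1 h2
      rw [add_mulVec, dotProduct_add, map_add, h2, h1]
      linarith [hSH 2 x, hSH 1 x]
  have hBtr : ∑ i, hB'.eigenvalues i = lA 2 + lA 1 := by
    have := congrArg RCLike.re hB'.trace_eq_sum_eigenvalues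
    rw [trace_add, trace_slice_mul_conjTranspose, trace_slice_mul_conjTranspose, map_add, hb, hb]
      at this
    simpa using this.symm
  have hBle : B ≤ rho2 c := by
    have hrest : rho2 c - B = S 0 * (S 0)ᴴ := by
      rw [rho2_eq_sum_slice c b, Fin.sum_univ_three]
      simp only [B, S]
      abel
    rw [le_iff, hrest]
    exact posSemidef_self_mul_conjTranspose _
  obtain ⟨j, hj⟩ := exists_forall_ne_sum_sub_div_two_le _ hBeig
  have hmiddle := hB.le_middle_of_le hB' hj hBle
  have hmono := hA.1 (show (1 : Fin 3) ≤ 2 by decide)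
  rw [hBtr] at hmiddle
  linarith

section Legs

variable (c : Fin 3 → Fin 3 → Fin 3 → ℂ)

def swapLegs : Fin 3 → Fin 3 → Fin 3 → ℂ := fun i j k => c i k j

def rotateLegs : Fin 3 → Fin 3 → Fin 3 → ℂ := fun i j k => c j k i

@[simp] theorem rho1_swapLegs : rho1 (swapLegs c) = rho1 c := by
  ext i i'
  simp only [rho1, swapLegs, of_apply]
  exact Finset.sum_comm

@[simp] theorem rho2_swapLegs : rho2 (swapLegs c) = rho3 c := rfl

@[simp] theorem rho3_swapLegs : rho3 (swapLegs c) = rho2 c := rfl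

@[simp] theorem rho1_rotateLegs : rho1 (rotateLegs c) = rho3 c := rfl

@[simp] theorem rho2_rotateLegs : rho2 (rotateLegs c) = rho1 c := by
  ext j j'
  simp only [rho1, rho2, rotateLegs, of_apply]
  exact Finset.sum_comm

@[simp] theorem rho3_rotateLegs : rho3 (rotateLegs c) = rho2 c := by
  ext k k'
  simp only [rho2, rho3, rotateLegs, of_apply]
  exact Finset.sum_comm

theorem exists_rho_eq_of_ne {a b e : Fin 3} (hab : a ≠ b) (hae : a ≠ e) (hbe : b ≠ e) :
    ∃ d, rho1 d = ![rho1 c, rho2 c, rho3 c] a ∧ rho2 d = ![rho1 c, rho2 c, rho3 c] b ∧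
      rho3 d = ![rho1 c, rho2 c, rho3 c] e := by
  fin_cases a <;> fin_cases b <;> fin_cases e <;> simp at hab hae hbe ⊢
  · exact ⟨c, rfl, rfl, rfl⟩
  · exact ⟨swapLegs c, by simp⟩
  · exact ⟨rotateLegs (swapLegs c), by simp⟩
  · exact ⟨rotateLegs (rotateLegs c), by simp⟩
  · exact ⟨rotateLegs c, by simp⟩
  · exact ⟨rotateLegs (rotateLegs (swapLegs c)), by simp⟩

end Legs

theorem three_qutrit_coro_general (c : Fin 3 → Fin 3 → Fin 3 → ℂ)
    (l : Fin 3 → Fin 3 → ℝ)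
    (h1 : IsOrderedSpectrum (rho1 c) (l 0))
    (h2 : IsOrderedSpectrum (rho2 c) (l 1))
    (h3 : IsOrderedSpectrum (rho3 c) (l 2)) :
    ∀ a b c' : Fin 3, a ≠ b → a ≠ c' → b ≠ c' →
      l a 1 ≤ l b 1 + l c' 2 := by
  intro a b c' hab hac hbc
  have hl : ∀ i, IsOrderedSpectrum (![rho1 c, rho2 c, rho3 c] i) (l i) := by
    intro i
    fin_cases i <;> assumption
  obtain ⟨d, hd1, hd2, hd3⟩ := exists_rho_eq_of_ne c hab hac hbc
  exact middle_le_middle_add_top (hd1 ▸ hl a) (hd2 ▸ hl b) (hd3 ▸ hl c')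

theorem three_qutrit_coro (c : Fin 3 → Fin 3 → Fin 3 → ℂ)
    (hnorm : ∑ i : Fin 3, ∑ j : Fin 3, ∑ k : Fin 3, ‖c i j k‖ ^ 2 = 1)
    (l : Fin 3 → Fin 3 → ℝ)
    (h1 : IsOrderedSpectrum (rho1 c) (l 0))
    (h2 : IsOrderedSpectrum (rho2 c) (l 1))
    (h3 : IsOrderedSpectrum (rho3 c) (l 2)) :
    ∀ a b c' : Fin 3, a ≠ b → a ≠ c' → b ≠ c' →
      l a 1 ≤ l b 1 + l c' 2 :=
  three_qutrit_coro_general c l h1 h2 h3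
end
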